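/- Let T be an element of domres(λ,μ) (semi-standard tableau in alphabet {1<...<n<n̄<...<1̄} with dominant word). Then the entry count (i,j) of letter i in row j vanishes unless i = j or i = k̄ with 1 ≤ k ≤ j−1. In particular, row j can only contain the unbarred letter j and barred letters 1̄,...,(j−1)-bar. -/

import Mathlib

open scoped BigOperators

/-- The ordered alphabet `C_n = {1 < ⋯ < n < n̄ < ⋯ < 1̄}`.  `Sum.inl i` denotes the
unbarred letter `i+1` and `Sum.inr i` the barred letter `(i+1)‾` (0-indexed). -/
abbrev Letter (n : ℕ) := Fin n ⊕ Fin n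

/-- Position of a letter in the total order `1 < ⋯ < n < n̄ < ⋯ < 1̄`. -/
def Letter.idx {n : ℕ} : Letter n → ℕ
  | Sum.inl i => (i : ℕ)
  | Sum.inr i => 2 * n - 1 - (i : ℕ)

/-- A semi-standard Young tableau with entries in the alphabet `C_n`,
encoded by its row lengths (the shape) and its entries. -/
structure SSYT (n : ℕ) where
  rowLen : ℕ → ℕ
  entry : ℕ → ℕ → Option (Letter n)
  shape_antitone : ∀ r, rowLen (r + 1) ≤ rowLen r
  rows_bounded : ∀ r, 2 * n ≤ r → rowLen r = 0
  entry_isSome_iff : ∀ r c, (entry r c).isSome ↔ c < rowLen r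
  rows_weak : ∀ r c₁ c₂ l₁ l₂, c₁ ≤ c₂ → entry r c₁ = some l₁ → entry r c₂ = some l₂ →
    l₁.idx ≤ l₂.idx
  cols_strict : ∀ r₁ r₂ c l₁ l₂, r₁ < r₂ → entry r₁ c = some l₁ → entry r₂ c = some l₂ →
    l₁.idx < l₂.idx

namespace SSYT

variable {n : ℕ}

/-- The positions of the boxes of `T` in reading order of the word `w(T)`:
columns right to left, each column top to bottom. -/
def posList (T : SSYT n) : List (ℕ × ℕ) :=
  ((List.range (T.rowLen 0)).reverse).flatMap fun c =>
    (List.range (2 * n)).filterMap fun r =>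
      if c < T.rowLen r then some (r, c) else none

/-- The word `w(T)` of the tableau, read right to left and top to bottom. -/
def word (T : SSYT n) : List (Letter n) :=
  T.posList.filterMap fun p => T.entry p.1 p.2

/-- The far-eastern word `w'(T)`: rows read right to left, top to bottom. -/
def wordFE (T : SSYT n) : List (Letter n) :=
  (List.range (2 * n)).flatMap fun r =>
    ((List.range (T.rowLen r)).reverse).filterMap fun c => T.entry r c

/-- `(i,j)`: the number of occurrences of the letter `l` in row `r` of `T`. -/
def count (T : SSYT n) (l : Letter n) (r : ℕ) : ℕ :=
  ((List.range (T.rowLen r)).filter fun c => T.entry r c = some l).length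

end SSYT

/-- The cancellation property of a word: every barred letter `ī` has an unbarred `i`
strictly to its right. -/
def Cancel {n : ℕ} (w : List (Letter n)) : Prop :=
  ∀ (p : ℕ) (i : Fin n), w[p]? = some (Sum.inr i) →
    ∃ q, p < q ∧ w[q]? = some (Sum.inl i)

/-- The weight of a letter: `i` contributes `+ε_i`, `ī` contributes `-ε_i`. -/
def wt {n : ℕ} (l : Letter n) (j : ℕ) : ℤ :=
  match l with
  | Sum.inl i => if (i : ℕ) = j then 1 else 0
  | Sum.inr i => if (i : ℕ) = j then -1 else 0

/-- The `j`-th coordinate of the weight of a word. -/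
def wsum {n : ℕ} (w : List (Letter n)) (j : ℕ) : ℤ := (w.map fun l => wt l j).sum

/-- A word is dominant if every prefix has dominant weight `a₁ ≥ a₂ ≥ ⋯ ≥ a_n ≥ 0`
(coordinates `j ≥ n` of `wsum` vanish, so this includes `a_n ≥ 0`). -/
def Dominant {n : ℕ} (w : List (Letter n)) : Prop :=
  ∀ k j, wsum (w.take k) (j + 1) ≤ wsum (w.take k) j

/-- `domres(λ, μ)`: semi-standard Young tableaux of shape `λ`, word weight `μ`,
whose word is dominant. -/
def domresSet (n : ℕ) (lam mu : ℕ → ℕ) : Set (SSYT n) :=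
  {T | T.rowLen = lam ∧ (∀ j, wsum T.word j = (mu j : ℤ)) ∧ Dominant T.word}

/-- The row-entry restriction: row `r` (0-indexed) contains only the unbarred letter `r`
and barred letters `k̄` with `k < r`. -/
def RowRestriction {n : ℕ} (T : SSYT n) : Prop :=
  ∀ (r : ℕ) (l : Letter n), T.count l r ≠ 0 →
    (∃ h : r < n, l = Sum.inl ⟨r, h⟩) ∨ (∃ k : Fin n, (k : ℕ) < r ∧ l = Sum.inr k)

/-!
Read the word of `T` and stop at the first box `(r, c)` whose letter `x` is not allowed in its
row. No letter read before `x` is the unbarred `r`: an allowed letter equal to it sits in row `r`,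
hence to the right of `x`, and would force `x.idx ≤ r`, which (with `r ≤ x.idx` from column
strictness) makes `x` the allowed letter `r`. So the `r`-th weight coordinate of that prefix is
`≤ 0`, and dominance pins every coordinate `j ≥ r` of it to `0`. Appending `x = i` with `i > r`
would make coordinate `i` exceed coordinate `r`, and appending `x = k̄` with `k ≥ r` would make
coordinate `k` negative.
-/

section

variable {n : ℕ}

def AllowedInRow (r : ℕ) (l : Letter n) : Prop :=
  (∃ h : r < n, l = Sum.inl ⟨r, h⟩) ∨ ∃ k : Fin n, (k : ℕ) < r ∧ l = Sum.inr k

lemma allowedInRow_of_idx_eq {r : ℕ} {l : Letter n} (hr : r < n) (h : l.idx = r) :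
    AllowedInRow r l := by
  rcases l with i | k
  · exact Or.inl ⟨hr, congrArg Sum.inl (Fin.ext h)⟩
  · simp only [Letter.idx] at h
    omega

lemma wt_inr_nonpos (k : Fin n) (j : ℕ) : wt (Sum.inr k) j ≤ 0 := by
  simp only [wt]
  split_ifs <;> norm_num

lemma wsum_eq_zero_of_le {j : ℕ} (hj : n ≤ j) (w : List (Letter n)) : wsum w j = 0 := by
  refine List.sum_eq_zero fun x hx => ?_
  obtain ⟨l, -, rfl⟩ := List.mem_map.1 hx
  rcases l with i | i <;> simp only [wt] <;> rw [if_neg (by omega)]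

lemma wsum_nonpos {P : List (Letter n)} {j : ℕ} (h : ∀ l ∈ P, wt l j ≤ 0) : wsum P j ≤ 0 := by
  simpa [wsum] using List.sum_le_sum (l := P) (f := fun l => wt l j) (g := fun _ => (0 : ℤ)) h

namespace Dominant

variable {P Q : List (Letter n)}

lemma wsum_antitone (hd : Dominant (P ++ Q)) : Antitone (wsum P) := by
  refine antitone_nat_of_succ_le fun j => ?_
  simpa only [List.take_left] using hd P.length j

lemma wsum_nonneg (hd : Dominant (P ++ Q)) (j : ℕ) : 0 ≤ wsum P j := by
  rcases le_total n j with hj | hj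
  · exact (wsum_eq_zero_of_le hj P).ge
  · simpa only [wsum_eq_zero_of_le le_rfl P] using hd.wsum_antitone hj

theorem allowedInRow_of_prefix {x : Letter n} {r : ℕ} (hd : Dominant (P ++ x :: Q))
    (hP : ∀ l ∈ P, wt l r ≤ 0) (hx : r ≤ x.idx) : AllowedInRow r x := by
  have hd' : Dominant ((P ++ [x]) ++ Q) := by simpa using hd
  have hPr : wsum P r ≤ 0 := wsum_nonpos hP
  have hPx (j : ℕ) : wsum (P ++ [x]) j = wsum P j + wt x j := by
    simp [wsum]
  rcases x with i | k
  · have hir : (i : ℕ) = r := by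
      by_contra hne
      have hri : r < i := lt_of_le_of_ne hx (Ne.symm hne)
      have hanti := hd'.wsum_antitone hri.le
      have hnonneg := hd.wsum_nonneg i
      simp only [hPx, wt, if_pos, if_neg hne] at hanti
      omega
    exact Or.inl ⟨hir ▸ i.isLt, congrArg Sum.inl (Fin.ext hir)⟩
  · refine Or.inr ⟨k, ?_, rfl⟩
    by_contra! hrk
    have hanti := hd.wsum_antitone hrk
    have hnonneg := hd'.wsum_nonneg k
    simp only [hPx, wt, if_pos] at hnonneg
    omega

end Dominant

namespace SSYT

variable (T : SSYT n)

lemma lt_rowLen_of_entry {r c : ℕ} {l : Letter n} (h : T.entry r c = some l) : c < T.rowLen r :=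
  (T.entry_isSome_iff r c).1 (by simp [h])

lemma le_idx_of_entry {r c : ℕ} {l : Letter n} (h : T.entry r c = some l) : r ≤ l.idx := by
  induction r generalizing l with
  | zero => exact Nat.zero_le _
  | succ r ih =>
    have hc : c < T.rowLen r := (T.lt_rowLen_of_entry h).trans_le (T.shape_antitone r)
    obtain ⟨l', hl'⟩ := Option.isSome_iff_exists.1 ((T.entry_isSome_iff r c).2 hc)
    exact (ih hl').trans_lt (T.cols_strict r (r + 1) c l' l r.lt_succ_self hl' h)

lemma exists_entry_of_count_ne_zero {r : ℕ} {l : Letter n} (h : T.count l r ≠ 0) :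
    ∃ c, T.entry r c = some l := by
  obtain ⟨c, hc⟩ := List.exists_mem_of_length_pos (Nat.pos_of_ne_zero h)
  exact ⟨c, by simpa using (List.mem_filter.1 hc).2⟩

lemma mem_posList {r c : ℕ} (h : c < T.rowLen r) : (r, c) ∈ T.posList := by
  have hr : r < 2 * n := by
    by_contra! hr
    simp [T.rows_bounded r hr] at h
  have h0 : c < T.rowLen 0 := h.trans_le (antitone_nat_of_succ_le T.shape_antitone r.zero_le)
  simp only [posList, List.mem_flatMap, List.mem_reverse, List.mem_range, List.mem_filterMap]
  exact ⟨c, h0, r, hr, by simp [h]⟩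

lemma pairwise_posList :
    T.posList.Pairwise fun q p => q.1 = p.1 → p.2 < q.2 := by
  simp only [posList, List.pairwise_flatMap, List.pairwise_reverse, List.pairwise_filterMap]
  constructor
  · intro c _
    refine List.pairwise_lt_range.imp fun {r₁ r₂} hr q hq p hp h => ?_
    split_ifs at hq hp
    cases hq; cases hp
    exact absurd h hr.ne
  · refine List.pairwise_lt_range.imp fun {c₁ c₂} hc p hp q hq _ => ?_
    simp only [List.mem_filterMap, Option.ite_none_right_eq_some, Option.some.injEq] at hp hq
    obtain ⟨_, -, -, rfl⟩ := hp
    obtain ⟨_, -, -, rfl⟩ := hq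
    exact hc

lemma wt_nonpos_of_precedes_forbidden {p q : ℕ × ℕ} {x m : Letter n}
    (hx : T.entry p.1 p.2 = some x) (hxbad : ¬AllowedInRow p.1 x)
    (hm : T.entry q.1 q.2 = some m) (hmgood : AllowedInRow q.1 m)
    (hqp : q.1 = p.1 → p.2 < q.2) : wt m p.1 ≤ 0 := by
  rcases hmgood with ⟨hqn, rfl⟩ | ⟨k, -, rfl⟩
  · simp only [wt]
    split_ifs with hrow
    · have hxm := T.rows_weak p.1 p.2 q.2 x _ (hqp hrow).le hx (by rw [← hrow]; exact hm)
      have hxp : x.idx = p.1 :=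
        le_antisymm (by simpa [Letter.idx, hrow] using hxm) (T.le_idx_of_entry hx)
      exact absurd (allowedInRow_of_idx_eq (hrow ▸ hqn) hxp) hxbad
    · exact le_rfl
  · exact wt_inr_nonpos k p.1

theorem allowedInRow_of_dominant (hd : Dominant T.word) {r c : ℕ} {l : Letter n}
    (h : T.entry r c = some l) : AllowedInRow r l := by
  classical
  by_contra hbad
  let Forbidden : ℕ × ℕ → Prop := fun q => ∃ l, T.entry q.1 q.2 = some l ∧ ¬AllowedInRow q.1 l
  obtain ⟨p, hp⟩ := Option.isSome_iff_exists.1 <|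
    List.find?_isSome (p := fun q => decide (Forbidden q)).2
      ⟨(r, c), T.mem_posList (T.lt_rowLen_of_entry h), decide_eq_true ⟨l, h, hbad⟩⟩
  obtain ⟨hpForbidden, L₁, L₂, hsplit, hfirst⟩ := List.find?_eq_some_iff_append.1 hp
  obtain ⟨x, hx, hxbad⟩ := of_decide_eq_true hpForbidden
  let e : ℕ × ℕ → Option (Letter n) := fun q => T.entry q.1 q.2
  have hword : T.word = L₁.filterMap e ++ x :: L₂.filterMap e := by
    rw [word, hsplit, List.filterMap_append, List.filterMap_cons_some (f := e) hx]
  have hbefore : ∀ q ∈ L₁, q.1 = p.1 → p.2 < q.2 := fun q hq =>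
    (List.pairwise_append.1 (hsplit ▸ T.pairwise_posList)).2.2 q hq p List.mem_cons_self
  refine hxbad ((hword ▸ hd).allowedInRow_of_prefix (fun m hm => ?_) (T.le_idx_of_entry hx))
  obtain ⟨q, hq, hqm⟩ := List.mem_filterMap.1 hm
  have hqgood : AllowedInRow q.1 m := by
    by_contra hqbad
    have hqok := hfirst q hq
    simp only [Bool.not_eq_true', decide_eq_false_iff_not] at hqok
    exact hqok ⟨m, hqm, hqbad⟩
  exact T.wt_nonpos_of_precedes_forbidden hx hxbad hqm hqgood (hbefore q hq)

end SSYT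

end

/-- Lemma `variablelemma`: every tableau in `domres(λ,μ)` satisfies the
row-entry restriction: the count `(i,j)` of letter `i` in row `j` vanishes unless `i = j`
or `i = k̄` with `k < j`. -/
theorem domres_rowRestriction (n : ℕ) (lam mu : ℕ → ℕ) (T : SSYT n)
    (hT : T ∈ domresSet n lam mu) : RowRestriction T := fun _ _ hcount =>
  have ⟨_, hc⟩ := T.exists_entry_of_count_ne_zero hcount
  T.allowedInRow_of_dominant hT.2.2 hc
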